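/- arXiv:1605.01036 — 5 statements merged into one kernel-verified Lean document; each statement's English description precedes it below -/
import Mathlib

section
/- A matrix X ∈ ℂ^{N×m} is a global minimizer of E₀ if and only if its columns are orthonormal (X*X = I) and tr[X*HX] = λ₁ + λ₂ + ⋯ + λ_m, the sum of the m most negative eigenvalues of H. -/
open Matrix Polynomial Finset
open scoped ComplexOrder

attribute [local instance] Matrix.frobeniusSeminormedAddCommGroup
  Matrix.frobeniusNormedAddCommGroup Matrix.frobeniusNormedSpace

/-- The OMM functional `E₀(X) = tr[(2I − X*X) X*HX]` (real-valued, since `H` is Hermitian). -/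
noncomputable def E0 {N m : ℕ} (H : Matrix (Fin N) (Fin N) ℂ)
    (X : Matrix (Fin N) (Fin m) ℂ) : ℝ :=
  (((2 : ℂ) • (1 : Matrix (Fin m) (Fin m) ℂ) - Xᴴ * X) * (Xᴴ * H * X)).trace.re

/-
Put `P = X X*`. Then `E₀(X) = tr[H (2P − P²)]` and `2P − P² = I − (I − P)² ≤ I`. In an eigenbasis
of `H`, `E₀(X) = Σ λᵢ qᵢ` where the `qᵢ ≤ 1` are the diagonal entries of `2P − P²`, and their
positive parts sum to at most `m`. As every `λᵢ < 0`, the bathtub principle gives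
`Σ λᵢ qᵢ ≥ λ₁ + ⋯ + λ_m`, with equality only if `Σ qᵢ = m`; since
`tr(2P − P²) = m − ‖I − X*X‖²_F`, that forces `X*X = I`. The bound is attained by the first `m`
eigenvectors of `H`.
-/

theorem Fintype.exists_equiv_comp_eq_of_map_univ_eq {α β γ : Type*} [Fintype α] [Fintype β]
    [DecidableEq γ] {f : α → γ} {g : β → γ}
    (h : univ.val.map f = univ.val.map g) : ∃ e : α ≃ β, g ∘ e = f := by
  have hcard (c : γ) : Fintype.card { a // f a = c } = Fintype.card { b // g b = c } := by
    simpa [Fintype.card_subtype, Multiset.count_map, eq_comm, Finset.card, filter_val] using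
      congrArg (Multiset.count c) h
  exact ⟨Equiv.ofFiberEquiv fun c => Fintype.equivOfCardEq (hcard c),
    funext (Equiv.ofFiberEquiv_map _)⟩

theorem Finset.sum_add_mul_sub_card_le_sum_mul {ι : Type*} [Fintype ι] (s : Finset ι)
    {d t : ι → ℝ} {c : ℝ} (hs : ∀ i ∈ s, d i ≤ c) (hsc : ∀ i ∉ s, c ≤ d i)
    (ht0 : ∀ i, 0 ≤ t i) (ht1 : ∀ i, t i ≤ 1) :
    ∑ i ∈ s, d i + c * (∑ i, t i - #s) ≤ ∑ i, d i * t i := by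
  classical
  have hsplit : ∑ i, d i * t i - (∑ i ∈ s, d i + c * (∑ i, t i - #s)) =
      ∑ i, (d i - c) * (t i - if i ∈ s then 1 else 0) := by
    simp only [mul_sub, mul_ite, mul_one, mul_zero, sum_sub_distrib, ← sum_filter,
      filter_mem_eq_inter, univ_inter, sub_mul, ← mul_sum, sum_const, nsmul_eq_mul]
    ring
  have hterm (i : ι) : 0 ≤ (d i - c) * (t i - if i ∈ s then 1 else 0) := by
    by_cases hi : i ∈ s
    · simpa [hi] using mul_nonneg_of_nonpos_of_nonpos (sub_nonpos.2 (hs i hi))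
        (sub_nonpos.2 (ht1 i))
    · simpa [hi] using mul_nonneg (sub_nonneg.2 (hsc i hi)) (ht0 i)
  linarith [sum_nonneg fun i (_ : i ∈ univ) => hterm i]

theorem sum_castLE_le_sum_mul {N m : ℕ} (hm : 0 < m) (hmN : m ≤ N) {lam q : Fin N → ℝ}
    (hmono : Monotone lam) (hneg : ∀ i, lam i < 0) (hq1 : ∀ i, q i ≤ 1)
    (hq : ∑ i, max (q i) 0 ≤ m) :
    ∑ k : Fin m, lam (Fin.castLE hmN k) ≤ ∑ i, lam i * q i ∧
      (∑ i, lam i * q i = ∑ k : Fin m, lam (Fin.castLE hmN k) → ∑ i, q i = m) := by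
  set t : Fin N → ℝ := fun i => max (q i) 0
  set c := lam ⟨m - 1, by omega⟩
  have hlow : ∀ i ∈ univ.map (Fin.castLEEmb hmN), lam i ≤ c := by
    simp only [mem_map, mem_univ, true_and, Fin.castLEEmb_apply, forall_exists_index]
    rintro _ k rfl
    exact hmono (Fin.mk_le_mk.2 (by omega))
  have hhigh : ∀ i ∉ univ.map (Fin.castLEEmb hmN), c ≤ lam i := by
    intro i hi
    refine hmono (Fin.mk_le_mk.2 ?_)
    by_contra! h
    exact hi (mem_map.2 ⟨⟨i, by omega⟩, mem_univ _, rfl⟩)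
  have hbath := (univ.map (Fin.castLEEmb hmN)).sum_add_mul_sub_card_le_sum_mul hlow hhigh
    (t := t) (fun i => le_max_right _ _) (fun i => max_le (hq1 i) zero_le_one)
  simp only [sum_map, card_map, card_univ, Fintype.card_fin, Fin.castLEEmb_apply] at hbath
  have htq (i : Fin N) : lam i * t i ≤ lam i * q i :=
    mul_le_mul_of_nonpos_left (le_max_left _ _) (hneg i).le
  have htq_sum := sum_le_sum fun i (_ : i ∈ univ) => htq i
  have hslack : 0 ≤ c * (∑ i, t i - m) :=
    mul_nonneg_of_nonpos_of_nonpos (hneg _).le (by linarith)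
  refine ⟨by linarith, fun heq => ?_⟩
  have ht_sum : ∑ i, t i = m := by
    have hc : c * (∑ i, t i - m) = 0 := by linarith
    linarith [(mul_eq_zero.1 hc).resolve_left (hneg _).ne]
  have hteq : ∀ i ∈ univ, lam i * t i = lam i * q i :=
    (sum_eq_sum_iff_of_le fun i _ => htq i).1 (by linarith)
  rw [← ht_sum]
  exact sum_congr rfl fun i hi => (mul_left_cancel₀ (hneg i).ne (hteq i hi)).symm

namespace Matrix

theorem IsHermitian.ofReal_re_trace {n : Type*} [Fintype n] {A : Matrix n n ℂ}
    (hA : A.IsHermitian) : (A.trace.re : ℂ) = A.trace :=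
  Complex.conj_eq_iff_re.1 ((trace_conjTranspose A).symm.trans (congrArg trace hA.eq))

theorem submatrix_id_equiv_mem_unitaryGroup {n : Type*} [Fintype n] [DecidableEq n]
    {U : Matrix n n ℂ} (hU : U ∈ unitaryGroup n ℂ) (e : n ≃ n) :
    U.submatrix id e ∈ unitaryGroup n ℂ := by
  rw [mem_unitaryGroup_iff', star_eq_conjTranspose, conjTranspose_submatrix,
    ← submatrix_mul _ _ _ _ _ Function.bijective_id, ← star_eq_conjTranspose,
    Unitary.star_mul_self_of_mem hU, submatrix_one_equiv]

theorem IsHermitian.exists_unitary_eq_conj_diagonal {n : Type*} [Fintype n] [DecidableEq n]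
    {A : Matrix n n ℂ} (hA : A.IsHermitian) {μ : n → ℝ}
    (hμ : A.charpoly = ∏ i, (X - C (μ i : ℂ))) :
    ∃ U ∈ unitaryGroup n ℂ, A = U * diagonal (fun i => (μ i : ℂ)) * Uᴴ := by
  have hroots : univ.val.map (RCLike.ofReal ∘ hA.eigenvalues) =
      univ.val.map (fun i => (μ i : ℂ)) := by
    rw [← hA.roots_charpoly_eq_eigenvalues, hμ, roots_prod _ _ (prod_ne_zero_iff.2
      fun i _ => X_sub_C_ne_zero _)]
    simp
  obtain ⟨e, he⟩ := Fintype.exists_equiv_comp_eq_of_map_univ_eq hroots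
  set V : Matrix n n ℂ := (hA.eigenvectorUnitary : Matrix n n ℂ)
  refine ⟨V.submatrix id e.symm,
    submatrix_id_equiv_mem_unitaryGroup hA.eigenvectorUnitary.2 e.symm, ?_⟩
  have hD : diagonal (fun i => (μ i : ℂ)) =
      ((diagonal fun i => (μ i : ℂ)).submatrix e e).submatrix e.symm e.symm := by simp
  conv_lhs => rw [hA.spectral_theorem, Unitary.conjStarAlgAut_apply, ← he,
    ← submatrix_diagonal_equiv, star_eq_conjTranspose]
  conv_rhs => rw [hD, conjTranspose_submatrix, submatrix_mul_equiv, submatrix_mul_equiv,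
    submatrix_id_id]

theorem lt_zero_of_posDef_neg_unitary_conj_diagonal {n : Type*} [Fintype n] [DecidableEq n]
    {U : Matrix n n ℂ} (hU : U ∈ unitaryGroup n ℂ) {μ : n → ℝ}
    (h : (-(U * diagonal (fun i => (μ i : ℂ)) * Uᴴ)).PosDef) (i : n) : μ i < 0 := by
  rw [← star_eq_conjTranspose, ← neg_mul, ← mul_neg,
    IsUnit.posDef_star_right_conjugate_iff (Unitary.isUnit_coe (U := ⟨U, hU⟩)), diagonal_neg,
    posDef_diagonal_iff] at h
  simpa [← Complex.ofReal_neg, Complex.zero_lt_real] using h i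

variable {n k : Type*} [Fintype k] [DecidableEq k]

/-- `2P − P²` for `P = Z Zᴴ`. -/
def ommDensity [Fintype n] (Z : Matrix n k ℂ) : Matrix n n ℂ := Z * ((2 : ℂ) • 1 - Zᴴ * Z) * Zᴴ

theorem one_sub_ommDensity_posSemidef [Fintype n] [DecidableEq n] (Z : Matrix n k ℂ) :
    (1 - Z.ommDensity).PosSemidef := by
  have hP : (1 - Z * Zᴴ)ᴴ = 1 - Z * Zᴴ := by simp [conjTranspose_sub]
  have h : 1 - Z.ommDensity = (1 - Z * Zᴴ)ᴴ * (1 - Z * Zᴴ) := by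
    rw [hP, ommDensity]
    simp only [Matrix.mul_sub, Matrix.sub_mul, Matrix.mul_smul, Matrix.smul_mul, Matrix.mul_one,
      Matrix.one_mul, Matrix.mul_assoc]
    module
  rw [h]
  exact posSemidef_conjTranspose_mul_self _

/-- The dominating matrix is `Z (2I − ZᴴZ)₊ Zᴴ`: the eigenvalues `(2 − ν)₊ ν` of
`(2I − ZᴴZ)₊ ZᴴZ` are at most `1`. -/
theorem exists_posSemidef_sub_ommDensity [Fintype n] (Z : Matrix n k ℂ) :
    ∃ P : Matrix n n ℂ, P.PosSemidef ∧ (P - Z.ommDensity).PosSemidef ∧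
      P.trace.re ≤ Fintype.card k := by
  have hW := isHermitian_conjTranspose_mul_self Z
  set ν := hW.eigenvalues
  set V := hW.eigenvectorUnitary
  set φ : (k → ℂ) →ₐ[ℂ] Matrix k k ℂ :=
    (Unitary.conjStarAlgAut ℂ _ V).toAlgEquiv.toAlgHom.comp (diagonalAlgHom ℂ)
  have hφ (a : k → ℂ) : φ a = V * diagonal a * (V : Matrix k k ℂ)ᴴ := rfl
  have hφ_psd (a : k → ℝ) (ha : 0 ≤ a) : (φ fun j => (a j : ℂ)).PosSemidef := by
    rw [hφ]
    exact (PosSemidef.diagonal (by simpa [Pi.le_def] using ha)).mul_mul_conjTranspose_same _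
  have hWφ : Zᴴ * Z = φ fun j => (ν j : ℂ) := hW.spectral_theorem
  set a : k → ℝ := fun j => max (2 - ν j) 0
  refine ⟨Z * φ (fun j => (a j : ℂ)) * Zᴴ,
    (hφ_psd a fun j => le_max_right _ _).mul_mul_conjTranspose_same Z, ?_, ?_⟩
  · have hsub : (φ fun j => (a j : ℂ)) - ((2 : ℂ) • 1 - Zᴴ * Z) =
        φ fun j => ((a j - (2 - ν j) : ℝ) : ℂ) := by
      rw [hWφ, Algebra.smul_def, mul_one, ← φ.commutes, ← map_sub, ← map_sub]
      congr 1
      ext j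
      simp
    rw [ommDensity, ← Matrix.sub_mul, ← Matrix.mul_sub, hsub]
    exact (hφ_psd _ fun j => sub_nonneg.2 (le_max_left _ _)).mul_mul_conjTranspose_same Z
  · have htrace : (Z * φ (fun j => (a j : ℂ)) * Zᴴ).trace = ∑ j, ((a j * ν j : ℝ) : ℂ) := by
      rw [trace_mul_cycle, hWφ, ← map_mul, hφ, trace_mul_cycle, ← star_eq_conjTranspose,
        Unitary.coe_star_mul_self, Matrix.one_mul, trace_diagonal]
      simp [mul_comm]
    have hle (j : k) : a j * ν j ≤ 1 := by
      rcases le_total (2 - ν j) 0 with h | h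
      · simp [a, max_eq_right h]
      · simp only [a, max_eq_left h]
        nlinarith [sq_nonneg (1 - ν j)]
    rw [htrace, ← Complex.ofReal_sum, Complex.ofReal_re]
    simpa using sum_le_sum fun j (_ : j ∈ univ) => hle j

theorem sum_max_re_diag_le_re_trace [Fintype n] {M P : Matrix n n ℂ} (hP : P.PosSemidef)
    (hPM : (P - M).PosSemidef) : ∑ i, max (M i i).re 0 ≤ P.trace.re := by
  rw [trace, Complex.re_sum]
  refine sum_le_sum fun i _ => max_le ?_ (Complex.le_def.1 hP.diag_nonneg).1
  simpa using (Complex.le_def.1 hPM.diag_nonneg).1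

theorem conjTranspose_mul_self_eq_one_of_re_trace_ommDensity [Fintype n] (Z : Matrix n k ℂ)
    (h : Z.ommDensity.trace.re = Fintype.card k) : Zᴴ * Z = 1 := by
  set G := 1 - Zᴴ * Z
  have hG : Gᴴ = G := by simp [G, conjTranspose_sub]
  have htrace : Z.ommDensity.trace = Fintype.card k - (Gᴴ * G).trace := by
    have : Zᴴ * Z * ((2 : ℂ) • 1 - Zᴴ * Z) = 1 - G * G := by
      simp only [G, Matrix.mul_sub, Matrix.sub_mul, Matrix.mul_smul, Matrix.mul_one,
        Matrix.one_mul]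
      module
    rw [hG, ommDensity, trace_mul_comm, ← Matrix.mul_assoc, this, trace_sub, trace_one]
  have hGG : (Gᴴ * G).trace = 0 := by
    have hnonneg := (posSemidef_conjTranspose_mul_self G).trace_nonneg
    rw [htrace, Complex.sub_re, Complex.natCast_re] at h
    exact Complex.ext (by simpa using h) (Complex.le_def.1 hnonneg).2.symm
  exact (sub_eq_zero.1 (trace_conjTranspose_mul_self_eq_zero_iff.1 hGG)).symm

end Matrix

section E0

variable {N m : ℕ}

theorem E0_eq_re_trace_mul_ommDensity (H : Matrix (Fin N) (Fin N) ℂ)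
    (Y : Matrix (Fin N) (Fin m) ℂ) : E0 H Y = (H * Y.ommDensity).trace.re := by
  rw [E0, ommDensity, ← Matrix.mul_assoc, ← Matrix.mul_assoc, trace_mul_comm, ← Matrix.mul_assoc,
    ← Matrix.mul_assoc, trace_mul_comm]

theorem E0_diagonal (d : Fin N → ℝ) (Y : Matrix (Fin N) (Fin m) ℂ) :
    E0 (diagonal fun i => (d i : ℂ)) Y = ∑ i, d i * (Y.ommDensity i i).re := by
  rw [E0_eq_re_trace_mul_ommDensity, trace, Complex.re_sum]
  simp [diagonal_mul]

theorem E0_conj_unitary {U : Matrix (Fin N) (Fin N) ℂ} (hU : U ∈ unitaryGroup (Fin N) ℂ)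
    (D : Matrix (Fin N) (Fin N) ℂ) (Y : Matrix (Fin N) (Fin m) ℂ) :
    E0 (U * D * Uᴴ) Y = E0 D (Uᴴ * Y) := by
  have hUU : U * Uᴴ = 1 := by rw [← star_eq_conjTranspose]; exact Unitary.mul_star_self_of_mem hU
  simp only [E0, conjTranspose_mul, conjTranspose_conjTranspose, Matrix.mul_assoc]
  simp only [← Matrix.mul_assoc U, hUU, Matrix.one_mul]

theorem E0_of_conjTranspose_mul_self_eq_one (H : Matrix (Fin N) (Fin N) ℂ)
    {Y : Matrix (Fin N) (Fin m) ℂ} (hY : Yᴴ * Y = 1) : E0 H Y = (Yᴴ * H * Y).trace.re := by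
  rw [E0, hY, two_smul, add_sub_cancel_right, Matrix.one_mul]

theorem le_E0_diagonal (hm : 0 < m) (hmN : m ≤ N) {lam : Fin N → ℝ} (hmono : Monotone lam)
    (hneg : ∀ i, lam i < 0) (Z : Matrix (Fin N) (Fin m) ℂ) :
    ∑ k : Fin m, lam (Fin.castLE hmN k) ≤ E0 (diagonal fun i => (lam i : ℂ)) Z ∧
      (E0 (diagonal fun i => (lam i : ℂ)) Z = ∑ k : Fin m, lam (Fin.castLE hmN k) →
        Zᴴ * Z = 1) := by
  obtain ⟨P, hP, hPZ, hPtrace⟩ := Z.exists_posSemidef_sub_ommDensity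
  have hq1 (i : Fin N) : (Z.ommDensity i i).re ≤ 1 := by
    simpa using (Complex.le_def.1 Z.one_sub_ommDensity_posSemidef.diag_nonneg).1
  have hsum := (sum_max_re_diag_le_re_trace hP hPZ).trans (by simpa using hPtrace)
  obtain ⟨hle, heq⟩ := sum_castLE_le_sum_mul hm hmN hmono hneg hq1 hsum
  rw [E0_diagonal]
  refine ⟨hle, fun h => Z.conjTranspose_mul_self_eq_one_of_re_trace_ommDensity ?_⟩
  rw [trace, Complex.re_sum, Fintype.card_fin]
  exact heq h

theorem le_E0 (hm : 0 < m) (hmN : m ≤ N) {lam : Fin N → ℝ} (hmono : Monotone lam)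
    (hneg : ∀ i, lam i < 0) {H U : Matrix (Fin N) (Fin N) ℂ} (hU : U ∈ unitaryGroup (Fin N) ℂ)
    (hHU : H = U * diagonal (fun i => (lam i : ℂ)) * Uᴴ) (Y : Matrix (Fin N) (Fin m) ℂ) :
    ∑ k : Fin m, lam (Fin.castLE hmN k) ≤ E0 H Y ∧
      (E0 H Y = ∑ k : Fin m, lam (Fin.castLE hmN k) → Yᴴ * Y = 1) := by
  have hUY : (Uᴴ * Y)ᴴ * (Uᴴ * Y) = Yᴴ * Y := by
    rw [conjTranspose_mul, conjTranspose_conjTranspose, Matrix.mul_assoc, ← Matrix.mul_assoc U,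
      ← star_eq_conjTranspose, Unitary.mul_star_self_of_mem hU, Matrix.one_mul]
  rw [hHU, E0_conj_unitary hU, ← hUY]
  exact le_E0_diagonal hm hmN hmono hneg _

theorem E0_diagonal_submatrix_one (hmN : m ≤ N) (lam : Fin N → ℝ) :
    E0 (diagonal fun i => (lam i : ℂ)) ((1 : Matrix (Fin N) (Fin N) ℂ).submatrix id
      (Fin.castLE hmN)) = ∑ k : Fin m, lam (Fin.castLE hmN k) := by
  have hinj := Fin.castLE_injective hmN
  have hE (M : Matrix (Fin N) (Fin N) ℂ) :
      ((1 : Matrix (Fin N) (Fin N) ℂ).submatrix id (Fin.castLE hmN))ᴴ * M *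
        (1 : Matrix (Fin N) (Fin N) ℂ).submatrix id (Fin.castLE hmN) =
        M.submatrix (Fin.castLE hmN) (Fin.castLE hmN) := by
    ext i j
    simp [Matrix.mul_apply, Matrix.one_apply]
  have hEE := hE 1
  rw [Matrix.mul_one, submatrix_one _ hinj] at hEE
  rw [E0_of_conjTranspose_mul_self_eq_one _ hEE, hE, submatrix_diagonal _ _ hinj, trace_diagonal]
  simp

end E0

theorem stmt2_general {N m : ℕ} (hm : 0 < m) (hmN : m ≤ N)
    (H : Matrix (Fin N) (Fin N) ℂ) (hH : H.IsHermitian) (hneg : (-H).PosDef)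
    (lam : Fin N → ℝ) (hmono : Monotone lam)
    (hchar : H.charpoly = ∏ i : Fin N, (Polynomial.X - Polynomial.C (lam i : ℂ)))
    (X : Matrix (Fin N) (Fin m) ℂ) :
    (∀ Y : Matrix (Fin N) (Fin m) ℂ, E0 H X ≤ E0 H Y) ↔
      (Xᴴ * X = 1 ∧
        (Xᴴ * H * X).trace = ((∑ i : Fin m, lam (Fin.castLE hmN i) : ℝ) : ℂ)) := by
  obtain ⟨U, hU, hHU⟩ := hH.exists_unitary_eq_conj_diagonal hchar
  have hlam := lt_zero_of_posDef_neg_unitary_conj_diagonal hU (hHU ▸ hneg)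
  have hbound := le_E0 hm hmN hmono hlam hU hHU
  have hattained : E0 H (U * (1 : Matrix (Fin N) (Fin N) ℂ).submatrix id (Fin.castLE hmN)) =
      ∑ k : Fin m, lam (Fin.castLE hmN k) := by
    rw [hHU, E0_conj_unitary hU, ← Matrix.mul_assoc, ← star_eq_conjTranspose,
      Unitary.star_mul_self_of_mem hU, Matrix.one_mul, E0_diagonal_submatrix_one]
  have htrace := (isHermitian_conjTranspose_mul_mul X hH).ofReal_re_trace
  constructor
  · intro hmin
    have hEX := le_antisymm (hattained ▸ hmin _) (hbound X).1
    have hX := (hbound X).2 hEX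
    exact ⟨hX, by rw [← htrace, ← E0_of_conjTranspose_mul_self_eq_one H hX, hEX]⟩
  · rintro ⟨hX, hXtrace⟩ Y
    rw [E0_of_conjTranspose_mul_self_eq_one H hX, hXtrace, Complex.ofReal_re]
    exact (hbound Y).1

/-- `X` is a global minimizer of `E₀` iff its columns are orthonormal (`X*X = I`) and
`tr[X*HX] = λ₁ + ⋯ + λ_m`. -/
theorem stmt2 {N m : ℕ} (hN : 0 < N) (hm : 0 < m) (hmN : m ≤ N)
    (H : Matrix (Fin N) (Fin N) ℂ) (hH : H.IsHermitian) (hneg : (-H).PosDef)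
    (lam : Fin N → ℝ) (hmono : Monotone lam)
    (hchar : H.charpoly = ∏ i : Fin N, (Polynomial.X - Polynomial.C (lam i : ℂ)))
    (X : Matrix (Fin N) (Fin m) ℂ) :
    (∀ Y : Matrix (Fin N) (Fin m) ℂ, E0 H X ≤ E0 H Y) ↔
      (Xᴴ * X = 1 ∧
        (Xᴴ * H * X).trace = ((∑ i : Fin m, lam (Fin.castLE hmN i) : ℝ) : ℂ)) :=
  stmt2_general hm hmN H hH hneg lam hmono hchar X
end

section
/- If X ∈ ℂ^{N×m} is a critical point of E₀, then every eigenvalue of the Hermitian matrix X*X belongs to the set {0, 1}. -/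
/-!
The derivative of `E₀` at `X` in the direction `D` is `2 Re tr(Gᴴ D)` with
`G = H X (2 - S) - X A`, where `S = X*X` and `A = X*HX`; so at a critical point `G = 0`, and
multiplying by `X*` gives `A (2 - S) = S A`. Testing this against an eigenvector `v` of `S`
with (real) eigenvalue `c` gives `2 (1 - c) v*Av = 0`. If `c ≠ 1` then `(Xv)* H (Xv) = v*Av = 0`,
so `Xv = 0` because `H` is negative definite, and `c v = S v = X*(Xv) = 0` forces `c = 0`.
-/

open Matrix
open scoped ComplexOrder

attribute [local instance] Matrix.frobeniusSeminormedAddCommGroup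
  Matrix.frobeniusNormedAddCommGroup Matrix.frobeniusNormedSpace

namespace Matrix

section Calculus

variable {l n p : Type*} [Fintype l] [Fintype n] [Fintype p]
  {E : Type*} [NormedAddCommGroup E] [NormedSpace ℝ E]

theorem isBoundedBilinearMap_mul :
    IsBoundedBilinearMap ℝ fun q : Matrix l n ℂ × Matrix n p ℂ => q.1 * q.2 where
  add_left := Matrix.add_mul
  smul_left r A B := Matrix.smul_mul r A B
  add_right := Matrix.mul_add
  smul_right r A B := Matrix.mul_smul A r B
  bound := ⟨1, one_pos, fun A B => by simpa using frobenius_norm_mul A B⟩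

theorem _root_.HasFDerivAt.matrix_mul {f : E → Matrix l n ℂ} {g : E → Matrix n p ℂ}
    {f' : E →L[ℝ] Matrix l n ℂ} {g' : E →L[ℝ] Matrix n p ℂ} {x : E}
    (hf : HasFDerivAt f f' x) (hg : HasFDerivAt g g' x) :
    HasFDerivAt (fun y => f y * g y)
      (Matrix.isBoundedBilinearMap_mul.deriv (f x, g x) ∘L f'.prod g') x :=
  (Matrix.isBoundedBilinearMap_mul.hasFDerivAt (f x, g x)).comp
    (g := fun q : Matrix l n ℂ × Matrix n p ℂ => q.1 * q.2) x (hf.prodMk hg)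

theorem isBoundedLinearMap_conjTranspose :
    IsBoundedLinearMap ℝ (conjTranspose : Matrix l n ℂ → Matrix n l ℂ) :=
  IsLinearMap.with_bound ⟨conjTranspose_add, fun r A => by simp [conjTranspose_smul]⟩ 1
    fun A => by simp [frobenius_norm_conjTranspose]

theorem isBoundedLinearMap_re_trace : IsBoundedLinearMap ℝ fun A : Matrix n n ℂ => A.trace.re :=
  (IsBoundedLinearMap.isLinearMap_and_continuous_iff_isBoundedLinearMap _).mp
    ⟨⟨fun A B => by simp [trace_add], fun r A => by simp [trace_smul]⟩,
      Complex.continuous_re.comp continuous_id.matrix_trace⟩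

end Calculus

variable {l n : Type*} [Fintype l] [Fintype n]

theorem re_trace_conjTranspose_mul_self_eq_zero_iff {A : Matrix l n ℂ} :
    (Aᴴ * A).trace.re = 0 ↔ A = 0 := by
  have him : (Aᴴ * A).trace.im = 0 :=
    ((Complex.nonneg_iff.mp (posSemidef_conjTranspose_mul_self A).trace_nonneg).2).symm
  rw [← trace_conjTranspose_mul_self_eq_zero_iff, Complex.ext_iff, him]
  simp

theorem PosDef.mulVec_eq_zero_of_dotProduct_mulVec_eq_zero {P : Matrix l l ℂ} (hP : P.PosDef)
    (X : Matrix l n ℂ) {v : n → ℂ} (h : star v ⬝ᵥ (Xᴴ * P * X) *ᵥ v = 0) : X *ᵥ v = 0 := by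
  by_contra hXv
  have hpos := hP.dotProduct_mulVec_pos hXv
  rw [star_mulVec, ← dotProduct_mulVec, mulVec_mulVec, mulVec_mulVec, h] at hpos
  exact lt_irrefl 0 hpos

theorem IsHermitian.eq_one_or_dotProduct_mulVec_eq_zero [DecidableEq n] {S A : Matrix n n ℂ}
    (hS : S.IsHermitian) (hAS : A * ((2 : ℂ) • 1 - S) = S * A) {v : n → ℂ} {c : ℝ}
    (hv : S *ᵥ v = (c : ℂ) • v) :
    c = 1 ∨ star v ⬝ᵥ A *ᵥ v = 0 := by
  have hL : star v ⬝ᵥ (A * ((2 : ℂ) • 1 - S)) *ᵥ v = (2 - c) * (star v ⬝ᵥ A *ᵥ v) := by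
    rw [← mulVec_mulVec, sub_mulVec, smul_mulVec, one_mulVec, hv, ← sub_smul, mulVec_smul,
      dotProduct_smul, smul_eq_mul]
  have hR : star v ⬝ᵥ (S * A) *ᵥ v = c * (star v ⬝ᵥ A *ᵥ v) := by
    rw [← mulVec_mulVec, dotProduct_mulVec, ← hS.eq, ← star_mulVec, hv, star_smul,
      smul_dotProduct, Complex.star_def, Complex.conj_ofReal, smul_eq_mul]
  have h : (2 * (1 - c) : ℂ) * (star v ⬝ᵥ A *ᵥ v) = 0 := by
    linear_combination hL.symm.trans ((congrArg (fun M => star v ⬝ᵥ M *ᵥ v) hAS).trans hR)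
  rcases mul_eq_zero.mp h with h | h
  · left
    exact_mod_cast (by linear_combination -h / 2 : (c : ℂ) = 1)
  · exact Or.inr h

end Matrix

section OMM

variable {N m : ℕ} (H : Matrix (Fin N) (Fin N) ℂ) (X : Matrix (Fin N) (Fin m) ℂ)

noncomputable def ommGrad : Matrix (Fin N) (Fin m) ℂ :=
  H * X * ((2 : ℂ) • 1 - Xᴴ * X) - X * (Xᴴ * H * X)

theorem fderiv_E0_apply_eq (D : Matrix (Fin N) (Fin m) ℂ) :
    fderiv ℝ (E0 H) X D = (((2 : ℂ) • 1 - Xᴴ * X) * (Xᴴ * H * D + Dᴴ * H * X)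
      + -(Xᴴ * D + Dᴴ * X) * (Xᴴ * H * X)).trace.re := by
  have hY := isBoundedLinearMap_conjTranspose.hasFDerivAt (x := X)
  have hT : HasFDerivAt (fun Y : Matrix (Fin N) (Fin m) ℂ => (2 : ℂ) • 1 - Yᴴ * Y) _ X :=
    (hY.matrix_mul (hasFDerivAt_id X)).const_sub _
  have hA : HasFDerivAt (fun Y : Matrix (Fin N) (Fin m) ℂ => Yᴴ * H * Y) _ X :=
    ((Matrix.isBoundedBilinearMap_mul.isBoundedLinearMap_left H).hasFDerivAt.comp
      (g := fun A : Matrix (Fin m) (Fin N) ℂ => A * H) X hY).matrix_mul (hasFDerivAt_id X)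
  have hE : HasFDerivAt (E0 H) _ X :=
    isBoundedLinearMap_re_trace.hasFDerivAt.comp
      (g := fun A : Matrix (Fin m) (Fin m) ℂ => A.trace.re) X (hT.matrix_mul hA)
  rw [hE.fderiv]
  rfl

theorem fderiv_E0_apply (hH : H.IsHermitian) (D : Matrix (Fin N) (Fin m) ℂ) :
    fderiv ℝ (E0 H) X D = 2 * ((ommGrad H X)ᴴ * D).trace.re := by
  rw [fderiv_E0_apply_eq]
  set T : Matrix (Fin m) (Fin m) ℂ := (2 : ℂ) • 1 - Xᴴ * X with hT_def
  set A := Xᴴ * H * X with hA_def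
  have hT : Tᴴ = T := by simp [hT_def, conjTranspose_smul]
  have hA : Aᴴ = A := by simp [hA_def, hH.eq, Matrix.mul_assoc]
  have ha : (T * (Dᴴ * H * X)).trace = star (T * (Xᴴ * H * D)).trace := by
    rw [← trace_conjTranspose, trace_mul_comm]
    simp [hT, hH.eq, Matrix.mul_assoc]
  have hb : (Dᴴ * X * A).trace = star (Xᴴ * D * A).trace := by
    rw [← trace_conjTranspose, trace_mul_comm]
    simp [hA, Matrix.mul_assoc]
  have hM : ((ommGrad H X)ᴴ * D).trace = (T * (Xᴴ * H * D)).trace - (Xᴴ * D * A).trace := by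
    rw [ommGrad, ← hT_def, ← hA_def, conjTranspose_sub, conjTranspose_mul, conjTranspose_mul,
      conjTranspose_mul, hT, hA, hH.eq, Matrix.sub_mul, trace_sub, trace_mul_comm (Xᴴ * D),
      Matrix.mul_assoc, Matrix.mul_assoc, Matrix.mul_assoc, Matrix.mul_assoc]
  rw [hM, Matrix.mul_add, Matrix.neg_mul, Matrix.add_mul, trace_add, trace_neg, trace_add,
    trace_add, ha, hb]
  simp only [Complex.add_re, Complex.neg_re, Complex.sub_re, Complex.star_def, Complex.conj_re]
  ring

theorem ommGrad_eq_zero_of_fderiv_eq_zero (hH : H.IsHermitian) (hX : fderiv ℝ (E0 H) X = 0) :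
    ommGrad H X = 0 := by
  have h := fderiv_E0_apply H X hH (ommGrad H X)
  rw [hX, _root_.zero_apply] at h
  exact re_trace_conjTranspose_mul_self_eq_zero_iff.mp (by linarith)

theorem mul_two_sub_eq_of_ommGrad_eq_zero (h : ommGrad H X = 0) :
    Xᴴ * H * X * ((2 : ℂ) • 1 - Xᴴ * X) = Xᴴ * X * (Xᴴ * H * X) := by
  simpa only [Matrix.mul_assoc] using congrArg (Xᴴ * ·) (sub_eq_zero.mp h)

end OMM

theorem stmt6_general {N m : ℕ}
    (H : Matrix (Fin N) (Fin N) ℂ) (hH : H.IsHermitian) (hneg : (-H).PosDef)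
    (X : Matrix (Fin N) (Fin m) ℂ) (hcrit : fderiv ℝ (E0 H) X = 0) :
    ∀ c ∈ spectrum ℂ (Xᴴ * X), c = 0 ∨ c = 1 := by
  intro c hc
  have hS := isHermitian_conjTranspose_mul_self X
  rw [hS.spectrum_eq_image_range] at hc
  obtain ⟨_, ⟨i, rfl⟩, rfl⟩ := hc
  set v : Fin m → ℂ := ⇑(hS.eigenvectorBasis i)
  have hv : (Xᴴ * X) *ᵥ v = (hS.eigenvalues i : ℂ) • v :=
    (hS.mulVec_eigenvectorBasis i).trans (RCLike.real_smul_eq_coe_smul _ _)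
  have hEL := mul_two_sub_eq_of_ommGrad_eq_zero H X (ommGrad_eq_zero_of_fderiv_eq_zero H X hH hcrit)
  rcases hS.eq_one_or_dotProduct_mulVec_eq_zero hEL hv with h1 | h0
  · exact Or.inr (by simp [h1])
  · left
    have hXv : X *ᵥ v = 0 := hneg.mulVec_eq_zero_of_dotProduct_mulVec_eq_zero X (by
      simpa only [Matrix.mul_neg, Matrix.neg_mul, neg_mulVec, dotProduct_neg, neg_eq_zero] using h0)
    have hv0 : v ≠ 0 := by simpa [v] using (hS.eigenvectorBasis).orthonormal.ne_zero i
    rw [← mulVec_mulVec, hXv, mulVec_zero, eq_comm, smul_eq_zero] at hv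
    simpa using hv.resolve_right hv0

/-- At a critical point `X` of `E₀`, every eigenvalue of `X*X` lies in `{0, 1}`. -/
theorem stmt6 {N m : ℕ} (hN : 0 < N) (hm : 0 < m) (hmN : m ≤ N)
    (H : Matrix (Fin N) (Fin N) ℂ) (hH : H.IsHermitian) (hneg : (-H).PosDef)
    (X : Matrix (Fin N) (Fin m) ℂ) (hcrit : fderiv ℝ (E0 H) X = 0) :
    ∀ c ∈ spectrum ℂ (Xᴴ * X), c = 0 ∨ c = 1 :=
  stmt6_general H hH hneg X hcrit
end

section
/- The set of critical points of E₀ is bounded: there exists R > 0 such that every critical point X ∈ ℂ^{N×m} of E₀ satisfies ‖X‖_F ≤ R. -/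
open Matrix
open scoped ComplexOrder

attribute [local instance] Matrix.frobeniusSeminormedAddCommGroup
  Matrix.frobeniusNormedAddCommGroup Matrix.frobeniusNormedSpace

/-!
Scaling `X ↦ tX` multiplies the quadratic part `2 tr(X*HX)` of `E₀` by `t²` and the quartic part
`tr(X*X X*HX)` by `t⁴`, so at a critical point the two traces coincide. Writing `P = XX*` and
`-H ≥ c I` with `c > 0`, this gives
`c ‖P‖² ≤ tr(P(-H)P) = tr(P(-H)) ≤ √N ‖P‖ ‖H‖`, hence `‖P‖ ≤ √N ‖H‖ / c` and
`‖X‖² = tr P ≤ √N ‖P‖ ≤ N ‖H‖ / c`.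
-/

section FrobeniusCalculus

variable {𝕜 : Type*} [RCLike 𝕜] {l m n : Type*} [Fintype l] [Fintype m] [Fintype n]
  {E : Type*} [NormedAddCommGroup E] [NormedSpace ℝ E]

theorem Matrix.isBoundedBilinearMap_mul_s8 :
    IsBoundedBilinearMap ℝ (fun p : Matrix l m 𝕜 × Matrix m n 𝕜 => p.1 * p.2) where
  add_left := Matrix.add_mul
  smul_left c A B := Matrix.smul_mul c A B
  add_right := Matrix.mul_add
  smul_right c A B := Matrix.mul_smul A c B
  bound := ⟨1, one_pos, fun A B => by simpa using frobenius_norm_mul A B⟩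

theorem Matrix.isBoundedLinearMap_conjTranspose_s8 :
    IsBoundedLinearMap ℝ (fun A : Matrix m n 𝕜 => Aᴴ) :=
  ⟨⟨conjTranspose_add, fun c A => by simp [conjTranspose_smul]⟩,
    ⟨1, one_pos, fun A => by simp [frobenius_norm_conjTranspose]⟩⟩

theorem Matrix.isBoundedLinearMap_trace :
    IsBoundedLinearMap ℝ (fun A : Matrix n n 𝕜 => A.trace) :=
  ((traceLinearMap n ℝ 𝕜).toContinuousLinearMap).isBoundedLinearMap

@[fun_prop]
theorem Differentiable.matrix_mul {f : E → Matrix l m 𝕜} {g : E → Matrix m n 𝕜}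
    (hf : Differentiable ℝ f) (hg : Differentiable ℝ g) :
    Differentiable ℝ (fun x => f x * g x) :=
  (isBoundedBilinearMap_mul_s8 (𝕜 := 𝕜) (l := l) (m := m) (n := n)).differentiable.comp
    (hf.prodMk hg)

@[fun_prop]
theorem Differentiable.matrix_conjTranspose {f : E → Matrix m n 𝕜} (hf : Differentiable ℝ f) :
    Differentiable ℝ (fun x => (f x)ᴴ) :=
  (isBoundedLinearMap_conjTranspose_s8 (𝕜 := 𝕜) (m := m) (n := n)).differentiable.comp hf

@[fun_prop]
theorem Differentiable.matrix_trace {f : E → Matrix n n 𝕜} (hf : Differentiable ℝ f) :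
    Differentiable ℝ (fun x => (f x).trace) :=
  (isBoundedLinearMap_trace (𝕜 := 𝕜) (n := n)).differentiable.comp hf

end FrobeniusCalculus

section FrobeniusTrace

variable {m n : Type*} [Fintype m] [Fintype n]

theorem Matrix.frobenius_norm_sq {α : Type*} [SeminormedAddCommGroup α] (A : Matrix m n α) :
    ‖A‖ ^ 2 = ∑ i, ∑ j, ‖A i j‖ ^ 2 := by
  rw [frobenius_norm_def, ← Real.rpow_natCast, ← Real.rpow_mul (by positivity)]
  norm_num

theorem Matrix.frobenius_norm_sq_eq_re_trace_conjTranspose_mul_self (A : Matrix m n ℂ) :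
    ‖A‖ ^ 2 = (Aᴴ * A).trace.re := by
  rw [frobenius_norm_sq, trace, Complex.re_sum, Finset.sum_comm]
  refine Finset.sum_congr rfl fun j _ => ?_
  simp [mul_apply, Complex.re_sum, ← Complex.normSq_eq_norm_sq, Complex.normSq_apply]

theorem Matrix.re_trace_le_sqrt_card_mul_frobenius_norm (A : Matrix n n ℂ) :
    A.trace.re ≤ √(Fintype.card n) * ‖A‖ := by
  have hdiag : ∑ i, ‖A i i‖ ^ 2 ≤ ‖A‖ ^ 2 := by
    rw [frobenius_norm_sq]
    exact Finset.sum_le_sum fun i _ => Finset.single_le_sum (f := fun j => ‖A i j‖ ^ 2)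
      (fun j _ => by positivity) (Finset.mem_univ i)
  have hcs : (∑ i, ‖A i i‖) ^ 2 ≤ Fintype.card n * ∑ i, ‖A i i‖ ^ 2 :=
    sq_sum_le_card_mul_sum_sq
  calc A.trace.re ≤ ∑ i, ‖A i i‖ := by
        rw [trace, Complex.re_sum]
        exact Finset.sum_le_sum fun i _ => Complex.re_le_norm _
    _ ≤ √(Fintype.card n) * ‖A‖ := by
        rw [← Real.sqrt_sq (by positivity : 0 ≤ ‖A‖), ← Real.sqrt_mul (by positivity)]
        exact Real.le_sqrt_of_sq_le (hcs.trans (by gcongr))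

theorem Matrix.PosSemidef.mul_frobenius_norm_sq_le [DecidableEq n] {A : Matrix n n ℂ} {c : ℝ}
    (hA : (A - c • (1 : Matrix n n ℂ)).PosSemidef) (B : Matrix n m ℂ) :
    c * ‖B‖ ^ 2 ≤ (Bᴴ * A * B).trace.re := by
  have h := (Complex.le_def.mp (hA.conjTranspose_mul_mul_same B).trace_nonneg).1
  rw [Matrix.mul_sub, Matrix.sub_mul, Matrix.mul_smul, Matrix.smul_mul, Matrix.mul_one, trace_sub,
    trace_smul, Complex.sub_re, Complex.smul_re, smul_eq_mul,
    ← frobenius_norm_sq_eq_re_trace_conjTranspose_mul_self] at h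
  simpa [sub_nonneg] using h

end FrobeniusTrace

open scoped MatrixOrder in
theorem Matrix.PosDef.exists_pos_posSemidef_sub_smul_one {n : Type*} [Fintype n] [DecidableEq n]
    {A : Matrix n n ℂ} (hA : A.PosDef) :
    ∃ c > (0 : ℝ), (A - c • (1 : Matrix n n ℂ)).PosSemidef := by
  cases isEmpty_or_nonempty n
  · exact ⟨1, one_pos, by simpa [Subsingleton.elim _ (0 : Matrix n n ℂ)] using PosSemidef.zero⟩
  obtain ⟨c, hc, hle⟩ := (CFC.exists_pos_algebraMap_le_iff hA.isHermitian.isSelfAdjoint).2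
    fun x hx => hA.isStrictlyPositive.spectrum_pos hx
  exact ⟨c, hc, Matrix.le_iff.mp (by simpa [Algebra.algebraMap_eq_smul_one] using hle)⟩

theorem differentiable_E0 {N m : ℕ} (H : Matrix (Fin N) (Fin N) ℂ) :
    Differentiable ℝ (E0 (m := m) H) := by
  unfold E0
  fun_prop

theorem E0_smul {N m : ℕ} (H : Matrix (Fin N) (Fin N) ℂ) (X : Matrix (Fin N) (Fin m) ℂ) (t : ℝ) :
    E0 H (t • X) = 2 * t ^ 2 * (Xᴴ * H * X).trace.re
      - t ^ 4 * (Xᴴ * X * (Xᴴ * H * X)).trace.re := by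
  simp only [E0, conjTranspose_smul, star_trivial, Matrix.smul_mul, Matrix.mul_smul, sub_mul,
    trace_sub, trace_smul, Matrix.one_mul, smul_smul, Complex.sub_re, Complex.smul_re, smul_eq_mul,
    Complex.mul_re, Complex.re_ofNat, Complex.im_ofNat]
  ring

theorem re_trace_eq_of_fderiv_E0_eq_zero {N m : ℕ} {H : Matrix (Fin N) (Fin N) ℂ}
    {X : Matrix (Fin N) (Fin m) ℂ} (hX : fderiv ℝ (E0 H) X = 0) :
    (Xᴴ * X * (Xᴴ * H * X)).trace.re = (Xᴴ * H * X).trace.re := by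
  set a := (Xᴴ * H * X).trace.re
  set b := (Xᴴ * X * (Xᴴ * H * X)).trace.re
  have hE : HasFDerivAt (E0 H) (0 : Matrix (Fin N) (Fin m) ℂ →L[ℝ] ℝ) ((1 : ℝ) • X) := by
    rw [one_smul, ← hX]; exact (differentiable_E0 H X).hasFDerivAt
  have hline : HasDerivAt (fun t : ℝ => t • X) X 1 :=
    ((hasDerivAt_id (1 : ℝ)).smul_const X).congr_deriv (one_smul ℝ X)
  have hzero : HasDerivAt (fun t : ℝ => 2 * t ^ 2 * a - t ^ 4 * b) 0 1 := by
    rw [← funext (E0_smul H X)]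
    exact hE.comp_hasDerivAt (1 : ℝ) hline
  have hpoly : HasDerivAt (fun t : ℝ => 2 * t ^ 2 * a - t ^ 4 * b) (4 * a - 4 * b) 1 :=
    ((((hasDerivAt_pow 2 (1 : ℝ)).const_mul 2).mul_const a).sub
      ((hasDerivAt_pow 4 (1 : ℝ)).mul_const b)).congr_deriv (by norm_num)
  linarith [hzero.unique hpoly]

theorem frobenius_norm_sq_le_of_fderiv_E0_eq_zero {N m : ℕ} {H : Matrix (Fin N) (Fin N) ℂ}
    {c : ℝ} (hc : 0 < c) (hH : (-H - c • (1 : Matrix (Fin N) (Fin N) ℂ)).PosSemidef)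
    {X : Matrix (Fin N) (Fin m) ℂ} (hX : fderiv ℝ (E0 H) X = 0) :
    ‖X‖ ^ 2 ≤ N * ‖H‖ / c := by
  set P := X * Xᴴ
  have hPP : Pᴴ = P := (isHermitian_mul_conjTranspose_self X).eq
  have hquartic : (Pᴴ * -H * P).trace = -(Xᴴ * X * (Xᴴ * H * X)).trace := by
    rw [hPP, Matrix.mul_neg, Matrix.neg_mul, trace_neg, trace_mul_comm (Xᴴ * X)]
    simp only [P, Matrix.mul_assoc]
    rw [trace_mul_comm]
    simp only [Matrix.mul_assoc]
  have hquadratic : (P * -H).trace = -(Xᴴ * H * X).trace := by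
    rw [Matrix.mul_neg, trace_neg, Matrix.mul_assoc, trace_mul_comm]
  have hnormX : ‖X‖ ^ 2 = P.trace.re := by
    rw [frobenius_norm_sq_eq_re_trace_conjTranspose_mul_self, trace_mul_comm]
  have hP : c * ‖P‖ ^ 2 ≤ √N * (‖P‖ * ‖H‖) :=
    calc c * ‖P‖ ^ 2 ≤ (Pᴴ * -H * P).trace.re := hH.mul_frobenius_norm_sq_le P
      _ = (P * -H).trace.re := by
        rw [hquartic, hquadratic, Complex.neg_re, Complex.neg_re,
          re_trace_eq_of_fderiv_E0_eq_zero hX]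
      _ ≤ √N * ‖P * -H‖ := by simpa using re_trace_le_sqrt_card_mul_frobenius_norm (P * -H)
      _ ≤ √N * (‖P‖ * ‖H‖) := by
        gcongr; simpa using frobenius_norm_mul P (-H)
  have hP' : ‖P‖ ≤ √N * ‖H‖ / c := by
    rw [le_div_iff₀ hc]
    rcases (norm_nonneg P).eq_or_lt with hP0 | hP0
    · rw [← hP0, zero_mul]; positivity
    · nlinarith
  calc ‖X‖ ^ 2 = P.trace.re := hnormX
    _ ≤ √N * ‖P‖ := by simpa using re_trace_le_sqrt_card_mul_frobenius_norm P
    _ ≤ √N * (√N * ‖H‖ / c) := by gcongr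
    _ = N * ‖H‖ / c := by rw [← mul_div_assoc, ← mul_assoc, Real.mul_self_sqrt (by positivity)]

theorem stmt8_general {N m : ℕ}
    (H : Matrix (Fin N) (Fin N) ℂ) (hneg : (-H).PosDef) :
    ∃ R > (0 : ℝ), ∀ X : Matrix (Fin N) (Fin m) ℂ,
      fderiv ℝ (E0 H) X = 0 → ‖X‖ ≤ R := by
  obtain ⟨c, hc, hshift⟩ := hneg.exists_pos_posSemidef_sub_smul_one
  refine ⟨√(N * ‖H‖ / c) + 1, by positivity, fun X hX => ?_⟩
  have hX' := Real.le_sqrt_of_sq_le (frobenius_norm_sq_le_of_fderiv_E0_eq_zero hc hshift hX)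
  linarith

/-- The set of critical points of `E₀` is bounded in the Frobenius norm. -/
theorem stmt8 {N m : ℕ} (hN : 0 < N) (hm : 0 < m) (hmN : m ≤ N)
    (H : Matrix (Fin N) (Fin N) ℂ) (hH : H.IsHermitian) (hneg : (-H).PosDef) :
    ∃ R > (0 : ℝ), ∀ X : Matrix (Fin N) (Fin m) ℂ,
      fderiv ℝ (E0 H) X = 0 → ‖X‖ ≤ R :=
  stmt8_general H hneg
end

section
/- Let M = argmin_{X ∈ S₀} ‖X‖₁ be the set of global minimizers of E₀ of minimal entrywise ℓ¹ norm. Then d(S_μ, M) → 0 as μ → 0⁺: for every ε > 0 there exists δ > 0 such that for all μ with 0 < μ < δ and every X ∈ S_μ, inf_{Y ∈ M} ‖X − Y‖_F < ε. -/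
open Matrix
open scoped ComplexOrder

attribute [local instance] Matrix.frobeniusSeminormedAddCommGroup
  Matrix.frobeniusNormedAddCommGroup Matrix.frobeniusNormedSpace

/-- The entrywise ℓ¹ norm `‖X‖₁ = Σ_{i,j} |X_{ij}|`. -/
noncomputable def l1 {N m : ℕ} (X : Matrix (Fin N) (Fin m) ℂ) : ℝ :=
  ∑ i, ∑ j, ‖X i j‖

/-- The penalized OMM functional `E_μ(X) = E₀(X) + μ‖X‖₁`. -/
noncomputable def Emu {N m : ℕ} (H : Matrix (Fin N) (Fin N) ℂ) (μ : ℝ)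
    (X : Matrix (Fin N) (Fin m) ℂ) : ℝ :=
  E0 H X + μ * l1 X

/-!
Since `E₀(0) = 0` and the penalty is nonnegative, every minimizer of `E_μ` lies in the sublevel
set `{E₀ ≤ 0}`. This set is compact: with `P = -H`, `A = X*X` and `B = X*PX` one has
`E₀(X) = tr(AB) - 2 tr B`, and `c I ≤ P ≤ C I` gives `tr(AB) ≥ c tr(A²) ≥ c ‖X‖⁴ / m` and
`tr B ≤ C ‖X‖²`. If the claim failed, there would be minimizers `Xₙ` of `E_{μₙ}` with `μₙ → 0`
staying `ε` away from `M`. A subsequence converges to some `X̄`; passing to the limit in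
`E_{μₙ}(Xₙ) ≤ E_{μₙ}(Z)` shows `X̄ ∈ S₀`, and for `W ∈ S₀` the inequality
`μₙ ‖Xₙ‖₁ ≤ μₙ ‖W‖₁` gives `‖X̄‖₁ ≤ ‖W‖₁`, so `X̄ ∈ M`, a contradiction.
-/

namespace Matrix
open scoped MatrixOrder
variable {𝕜 n k : Type*} [RCLike 𝕜] [Fintype n] [Fintype k]

lemma re_trace_conjTranspose_mul_self_eq_norm_sq (X : Matrix n k 𝕜) :
    RCLike.re (Xᴴ * X).trace = ‖X‖ ^ 2 := by
  rw [frobenius_norm_def, ← Real.rpow_natCast, ← Real.rpow_mul (by positivity)]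
  norm_num
  simp only [trace, diag_apply, mul_apply, conjTranspose_apply, RCLike.star_def, RCLike.conj_mul,
    map_sum]
  rw [Finset.sum_comm]
  norm_cast

lemma IsHermitian.sq_re_trace_le_card_mul_re_trace_mul_self {A : Matrix n n 𝕜} (hA : A.IsHermitian) :
    RCLike.re A.trace ^ 2 ≤ Fintype.card n * RCLike.re (A * A).trace := by
  have hdiag : ∀ i, RCLike.re (A i i) ^ 2 ≤ RCLike.re ((A * A) i i) := by
    intro i
    have hrow : RCLike.re ((A * A) i i) = ∑ j, RCLike.normSq (A i j) := by
      rw [mul_apply, map_sum]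
      refine Finset.sum_congr rfl fun j _ => ?_
      rw [← hA.apply i j, RCLike.normSq_apply]
      simp
    rw [hrow, sq]
    exact (RCLike.re_sq_le_normSq _).trans
      (Finset.single_le_sum (fun j _ => RCLike.normSq_nonneg _) (Finset.mem_univ i))
  calc RCLike.re A.trace ^ 2 = (∑ i, RCLike.re (A i i)) ^ 2 := by simp [trace]
    _ ≤ Fintype.card n * ∑ i, RCLike.re (A i i) ^ 2 := sq_sum_le_card_mul_sum_sq
    _ ≤ Fintype.card n * RCLike.re (A * A).trace := by
      rw [trace, map_sum]
      gcongr with i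
      exact hdiag i

lemma conjTranspose_mul_mul_le_conjTranspose_mul_mul {A B : Matrix n n 𝕜} (h : A ≤ B)
    (X : Matrix n k 𝕜) : Xᴴ * A * X ≤ Xᴴ * B * X := by
  rw [le_iff] at h ⊢
  simpa [Matrix.mul_sub, Matrix.sub_mul] using h.conjTranspose_mul_mul_same X

lemma re_trace_mono {A B : Matrix n n 𝕜} (h : A ≤ B) : RCLike.re A.trace ≤ RCLike.re B.trace := by
  have := (le_iff.mp h).trace_nonneg
  rw [trace_sub] at this
  exact RCLike.re_le_re (sub_nonneg.mp this)

lemma re_trace_conjTranspose_mul_self_mul_nonneg {D : Matrix k k 𝕜} (hD : 0 ≤ D)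
    (X : Matrix n k 𝕜) : 0 ≤ RCLike.re (Xᴴ * X * D).trace := by
  rw [Matrix.mul_assoc, trace_mul_comm]
  exact (RCLike.nonneg_iff.mp
    ((nonneg_iff_posSemidef.mp hD).mul_mul_conjTranspose_same X).trace_nonneg).1

variable [DecidableEq n]

lemma PosDef.exists_pos_smul_one_le {P : Matrix n n 𝕜} (hP : P.PosDef) :
    ∃ c : ℝ, 0 < c ∧ c • (1 : Matrix n n 𝕜) ≤ P := by
  cases isEmpty_or_nonempty n
  · exact ⟨1, one_pos, le_of_eq (Subsingleton.elim _ _)⟩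
  · obtain ⟨c, hc, hle⟩ := (CFC.exists_pos_algebraMap_le_iff hP.isHermitian.isSelfAdjoint).mpr
      fun x hx => hP.isStrictlyPositive.spectrum_pos hx
    exact ⟨c, hc, by simpa [Algebra.algebraMap_eq_smul_one] using hle⟩

lemma IsHermitian.exists_le_smul_one {P : Matrix n n 𝕜} (hP : P.IsHermitian) :
    ∃ C : ℝ, 0 ≤ C ∧ P ≤ C • (1 : Matrix n n 𝕜) := by
  obtain ⟨C, hC⟩ := (isCompact_iff_compactSpace.mpr inferInstance :
    IsCompact (spectrum ℝ P)).bddAbove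
  refine ⟨max C 0, le_max_right _ _, ?_⟩
  simpa [Algebra.algebraMap_eq_smul_one] using
    le_algebraMap_of_spectrum_le (fun x hx => (hC hx).trans (le_max_left _ _)) hP.isSelfAdjoint

end Matrix

section PenalizedMinimizers
open Filter Topology
variable {α : Type*} [PseudoMetricSpace α] {E P : α → ℝ}

lemma lex_min_of_tendsto_penalized_minimizers {μ : ℕ → ℝ} {x : ℕ → α} {x₀ : α} (hE : Continuous E)
    (hP : Continuous P) (hμ_pos : ∀ n, 0 < μ n) (hμ : Tendsto μ atTop (𝓝 0))
    (hmin : ∀ n z, E (x n) + μ n * P (x n) ≤ E z + μ n * P z) (hx : Tendsto x atTop (𝓝 x₀)) :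
    (∀ z, E x₀ ≤ E z) ∧ ∀ w, (∀ z, E w ≤ E z) → P x₀ ≤ P w := by
  have hEx : Tendsto (fun n => E (x n)) atTop (𝓝 (E x₀)) := (hE.tendsto x₀).comp hx
  have hPx : Tendsto (fun n => P (x n)) atTop (𝓝 (P x₀)) := (hP.tendsto x₀).comp hx
  refine ⟨fun z => ?_, fun w hw => ?_⟩
  · have hlhs : Tendsto (fun n => E (x n) + μ n * P (x n)) atTop (𝓝 (E x₀)) := by
      simpa using hEx.add (hμ.mul hPx)
    have hrhs : Tendsto (fun n => E z + μ n * P z) atTop (𝓝 (E z)) := by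
      simpa using (hμ.mul_const (P z)).const_add (E z)
    exact le_of_tendsto_of_tendsto' hlhs hrhs (hmin · z)
  · refine le_of_tendsto' hPx fun n => ?_
    have hEw : E w ≤ E (x n) := hw (x n)
    exact le_of_mul_le_mul_left (by linarith [hmin n w]) (hμ_pos n)

theorem forall_exists_infDist_penalized_minimizer_lt {K : Set α} (hK : IsCompact K)
    (hE : Continuous E) (hP : Continuous P)
    (hK_min : ∀ μ > 0, ∀ x, (∀ z, E x + μ * P x ≤ E z + μ * P z) → x ∈ K) :
    ∀ ε > (0 : ℝ), ∃ δ > (0 : ℝ), ∀ μ : ℝ, 0 < μ → μ < δ →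
      ∀ x ∈ {x | ∀ z, E x + μ * P x ≤ E z + μ * P z},
        Metric.infDist x {y | (∀ z, E y ≤ E z) ∧ ∀ w, (∀ z, E w ≤ E z) → P y ≤ P w} < ε := by
  intro ε hε
  by_contra! hbad
  choose μ hμ_pos hμ_lt x hmin hfar using fun n : ℕ => hbad (1 / (n + 1)) Nat.one_div_pos_of_nat
  obtain ⟨x₀, -, φ, hφ, hx⟩ := hK.tendsto_subseq fun n => hK_min _ (hμ_pos n) _ (hmin n)
  have hμ : Tendsto (μ ∘ φ) atTop (𝓝 0) :=
    squeeze_zero (fun n => (hμ_pos _).le) (fun n => (hμ_lt _).le)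
      (tendsto_one_div_add_atTop_nhds_zero_nat.comp hφ.tendsto_atTop)
  have hx₀ := lex_min_of_tendsto_penalized_minimizers hE hP (fun n => hμ_pos _) hμ (fun n => hmin (φ n)) hx
  have hfar₀ : ε ≤ Metric.infDist x₀ _ :=
    ge_of_tendsto (((Metric.continuous_infDist_pt _).tendsto x₀).comp hx)
      (Eventually.of_forall fun n => hfar (φ n))
  exact (hfar₀.trans_eq (Metric.infDist_zero_of_mem hx₀)).not_gt hε

end PenalizedMinimizers

section OMM
open scoped MatrixOrder
variable {N m : ℕ}

lemma continuous_E0 (H : Matrix (Fin N) (Fin N) ℂ) : Continuous (E0 (m := m) H) := by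
  unfold E0; fun_prop

lemma continuous_l1 : Continuous (l1 (N := N) (m := m)) := by
  unfold l1; fun_prop

lemma l1_nonneg (X : Matrix (Fin N) (Fin m) ℂ) : 0 ≤ l1 X := by
  unfold l1; positivity

lemma E0_lower_bound {H : Matrix (Fin N) (Fin N) ℂ} {c C : ℝ} (hc : 0 ≤ c)
    (hcH : c • 1 ≤ -H) (hHC : -H ≤ C • 1) (X : Matrix (Fin N) (Fin m) ℂ) :
    c * ‖X‖ ^ 4 - 2 * m * C * ‖X‖ ^ 2 ≤ m * E0 H X := by
  set A := Xᴴ * X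
  set B := Xᴴ * (-H) * X
  have hE : E0 H X = (A * B).trace.re - 2 * B.trace.re := by
    simp only [E0, Matrix.sub_mul, Algebra.smul_mul_assoc, one_mul, trace_sub, trace_smul,
      smul_eq_mul, Complex.sub_re, Complex.mul_re, Complex.re_ofNat, Complex.im_ofNat, zero_mul,
      sub_zero, Matrix.mul_neg, Matrix.neg_mul, mul_neg, trace_neg, Complex.neg_re,
      sub_neg_eq_add, A, B]
    ring
  have hcA : c • A ≤ B := by
    simpa [A, B, Matrix.mul_smul, Matrix.smul_mul] using
      conjTranspose_mul_mul_le_conjTranspose_mul_mul hcH X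
  have hBC : B ≤ C • A := by
    simpa [A, B, Matrix.mul_smul, Matrix.smul_mul] using
      conjTranspose_mul_mul_le_conjTranspose_mul_mul hHC X
  have hquartic : c * (A * A).trace.re ≤ (A * B).trace.re := by
    simpa [Matrix.mul_sub, trace_sub] using
      re_trace_conjTranspose_mul_self_mul_nonneg (sub_nonneg.mpr hcA) X
  have hquadratic : B.trace.re ≤ C * ‖X‖ ^ 2 := by
    simpa [A, re_trace_conjTranspose_mul_self_eq_norm_sq] using re_trace_mono hBC
  have htrace_sq : ‖X‖ ^ 4 ≤ m * (A * A).trace.re := by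
    simpa [A, re_trace_conjTranspose_mul_self_eq_norm_sq, ← pow_mul] using
      (isHermitian_conjTranspose_mul_self X).sq_re_trace_le_card_mul_re_trace_mul_self
  nlinarith

lemma isCompact_setOf_E0_nonpos {H : Matrix (Fin N) (Fin N) ℂ} (hneg : (-H).PosDef) :
    IsCompact {X : Matrix (Fin N) (Fin m) ℂ | E0 H X ≤ 0} := by
  obtain ⟨c, hc, hcH⟩ := hneg.exists_pos_smul_one_le
  obtain ⟨C, hC, hHC⟩ := hneg.isHermitian.exists_le_smul_one
  refine Metric.isCompact_of_isClosed_isBounded (isClosed_le (continuous_E0 H) continuous_const)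
    (isBounded_iff_forall_norm_le.mpr ⟨√(2 * m * C / c), fun X hX => ?_⟩)
  have hE0 : E0 H X ≤ 0 := hX
  have hquartic : c * ‖X‖ ^ 2 * ‖X‖ ^ 2 ≤ 2 * m * C * ‖X‖ ^ 2 := by
    nlinarith [E0_lower_bound hc.le hcH hHC X, mul_nonpos_of_nonneg_of_nonpos m.cast_nonneg hE0]
  refine Real.le_sqrt_of_sq_le ?_
  rcases (sq_nonneg ‖X‖).eq_or_lt with hzero | hpos
  · rw [← hzero]
    positivity
  · rw [le_div_iff₀ hc, mul_comm]
    exact le_of_mul_le_mul_right hquartic hpos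

lemma E0_nonpos_of_forall_Emu_le {H : Matrix (Fin N) (Fin N) ℂ} {μ : ℝ} (hμ : 0 ≤ μ)
    {X : Matrix (Fin N) (Fin m) ℂ} (hX : ∀ Z : Matrix (Fin N) (Fin m) ℂ, Emu H μ X ≤ Emu H μ Z) :
    E0 H X ≤ 0 := by
  have hX0 : E0 H X + μ * l1 X ≤ 0 := by simpa [Emu, E0, l1] using hX 0
  nlinarith [mul_nonneg hμ (l1_nonneg X)]

end OMM

theorem stmt11_general {N m : ℕ}
    (H : Matrix (Fin N) (Fin N) ℂ) (hneg : (-H).PosDef) :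
    ∀ ε > (0 : ℝ), ∃ δ > (0 : ℝ), ∀ μ : ℝ, 0 < μ → μ < δ →
      ∀ X ∈ {X : Matrix (Fin N) (Fin m) ℂ | ∀ Z : Matrix (Fin N) (Fin m) ℂ, Emu H μ X ≤ Emu H μ Z},
        Metric.infDist X
          {Y : Matrix (Fin N) (Fin m) ℂ | (∀ Z : Matrix (Fin N) (Fin m) ℂ, E0 H Y ≤ E0 H Z) ∧
            ∀ W : Matrix (Fin N) (Fin m) ℂ, (∀ Z : Matrix (Fin N) (Fin m) ℂ, E0 H W ≤ E0 H Z) → l1 Y ≤ l1 W}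
          < ε :=
  forall_exists_infDist_penalized_minimizer_lt (isCompact_setOf_E0_nonpos hneg) (continuous_E0 H)
    continuous_l1 fun _ hμ _ hX => E0_nonpos_of_forall_Emu_le hμ.le hX

/-- As `μ → 0⁺`, the minimizers of `E_μ` converge (in Frobenius distance) to the set
`M` of global minimizers of `E₀` of minimal entrywise ℓ¹ norm. -/
theorem stmt11 {N m : ℕ} (hN : 0 < N) (hm : 0 < m) (hmN : m ≤ N)
    (H : Matrix (Fin N) (Fin N) ℂ) (hH : H.IsHermitian) (hneg : (-H).PosDef) :
    ∀ ε > (0 : ℝ), ∃ δ > (0 : ℝ), ∀ μ : ℝ, 0 < μ → μ < δ →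
      ∀ X ∈ {X : Matrix (Fin N) (Fin m) ℂ | ∀ Z : Matrix (Fin N) (Fin m) ℂ, Emu H μ X ≤ Emu H μ Z},
        Metric.infDist X
          {Y : Matrix (Fin N) (Fin m) ℂ | (∀ Z : Matrix (Fin N) (Fin m) ℂ, E0 H Y ≤ E0 H Z) ∧
            ∀ W : Matrix (Fin N) (Fin m) ℂ, (∀ Z : Matrix (Fin N) (Fin m) ℂ, E0 H W ≤ E0 H Z) → l1 Y ≤ l1 W}
          < ε :=
  stmt11_general H hneg
end

section
/- For every μ > 0, the zero matrix is a strict local minimizer of E_μ: there exists r > 0 such that E_μ(X) > E_μ(0) = 0 for every X ∈ ℂ^{N×m} with 0 < ‖X‖_F < r. -/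
open Matrix
open scoped ComplexOrder

attribute [local instance] Matrix.frobeniusSeminormedAddCommGroup
  Matrix.frobeniusNormedAddCommGroup Matrix.frobeniusNormedSpace

/-!
The smooth part `E₀` vanishes to second order at `0`: `|E₀(X)| ≤ C ‖X‖_F²` for `‖X‖_F ≤ 1`,
whereas the penalty grows linearly, `μ‖X‖₁ ≥ μ‖X‖_F`. Hence `E_μ(X) ≥ ‖X‖_F (μ - C‖X‖_F) > 0`
once `0 < ‖X‖_F < min 1 (μ / (C + 1))`.
-/

theorem PiLp.norm_two_le_sum_norm {ι : Type*} [Fintype ι] {β : ι → Type*}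
    [∀ i, SeminormedAddCommGroup (β i)] (x : PiLp 2 β) : ‖x‖ ≤ ∑ i, ‖x i‖ := by
  rw [PiLp.norm_eq_of_L2]
  exact Real.sqrt_le_iff.mpr ⟨Finset.sum_nonneg fun _ _ => norm_nonneg _,
    Finset.sum_sq_le_sq_sum_of_nonneg fun _ _ => norm_nonneg _⟩

namespace Matrix

variable {n p α : Type*} [Fintype n] [Fintype p] [SeminormedAddCommGroup α]

theorem norm_entry_le_frobenius_norm (A : Matrix n p α) (i : n) (j : p) : ‖A i j‖ ≤ ‖A‖ := by
  change ‖A i j‖ ≤ ‖WithLp.toLp 2 fun i => WithLp.toLp 2 fun j => A i j‖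
  exact (PiLp.norm_apply_le (WithLp.toLp 2 fun j => A i j) j).trans
    (PiLp.norm_apply_le (WithLp.toLp 2 fun i => WithLp.toLp 2 fun j => A i j) i)

theorem frobenius_norm_le_sum_sum_norm (A : Matrix n p α) : ‖A‖ ≤ ∑ i, ∑ j, ‖A i j‖ := by
  change ‖WithLp.toLp 2 fun i => WithLp.toLp 2 fun j => A i j‖ ≤ _
  exact (PiLp.norm_two_le_sum_norm _).trans
    (Finset.sum_le_sum fun i _ => PiLp.norm_two_le_sum_norm (WithLp.toLp 2 fun j => A i j))

theorem norm_trace_le_card_mul_frobenius_norm (A : Matrix n n α) :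
    ‖A.trace‖ ≤ Fintype.card n * ‖A‖ :=
  calc ‖A.trace‖ ≤ ∑ i, ‖A i i‖ := norm_sum_le _ _
    _ ≤ ∑ _i : n, ‖A‖ := Finset.sum_le_sum fun i _ => norm_entry_le_frobenius_norm A i i
    _ = Fintype.card n * ‖A‖ := by simp

end Matrix

section OMM

variable {N m : ℕ}

theorem norm_le_l1 (X : Matrix (Fin N) (Fin m) ℂ) : ‖X‖ ≤ l1 X :=
  frobenius_norm_le_sum_sum_norm X

theorem Emu_zero (H : Matrix (Fin N) (Fin N) ℂ) (μ : ℝ) :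
    Emu H μ (0 : Matrix (Fin N) (Fin m) ℂ) = 0 := by
  simp [Emu, E0, l1]

theorem abs_E0_le (H : Matrix (Fin N) (Fin N) ℂ) {X : Matrix (Fin N) (Fin m) ℂ} (hX : ‖X‖ ≤ 1) :
    |E0 H X| ≤ m * (2 * ‖(1 : Matrix (Fin m) (Fin m) ℂ)‖ + 1) * ‖H‖ * ‖X‖ ^ 2 := by
  have hXH : ‖Xᴴ‖ = ‖X‖ := frobenius_norm_conjTranspose X
  have hfirst : ‖(2 : ℂ) • (1 : Matrix (Fin m) (Fin m) ℂ) - Xᴴ * X‖ ≤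
      2 * ‖(1 : Matrix (Fin m) (Fin m) ℂ)‖ + 1 :=
    calc _ ≤ ‖(2 : ℂ) • (1 : Matrix (Fin m) (Fin m) ℂ)‖ + ‖Xᴴ‖ * ‖X‖ :=
          (norm_sub_le _ _).trans (add_le_add_right (frobenius_norm_mul _ _) _)
      _ ≤ 2 * ‖(1 : Matrix (Fin m) (Fin m) ℂ)‖ + 1 := by
          rw [norm_smul, hXH, Complex.norm_two]
          nlinarith [norm_nonneg X]
  have hsecond : ‖Xᴴ * H * X‖ ≤ ‖H‖ * ‖X‖ ^ 2 :=
    calc _ ≤ ‖Xᴴ‖ * ‖H‖ * ‖X‖ :=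
          (frobenius_norm_mul _ _).trans
            (mul_le_mul_of_nonneg_right (frobenius_norm_mul _ _) (norm_nonneg _))
      _ = ‖H‖ * ‖X‖ ^ 2 := by rw [hXH]; ring
  calc |E0 H X| ≤ m * ‖((2 : ℂ) • (1 : Matrix (Fin m) (Fin m) ℂ) - Xᴴ * X) * (Xᴴ * H * X)‖ := by
        simpa [E0] using (Complex.abs_re_le_norm _).trans
          (norm_trace_le_card_mul_frobenius_norm
            (((2 : ℂ) • (1 : Matrix (Fin m) (Fin m) ℂ) - Xᴴ * X) * (Xᴴ * H * X)))
    _ ≤ m * ((2 * ‖(1 : Matrix (Fin m) (Fin m) ℂ)‖ + 1) * (‖H‖ * ‖X‖ ^ 2)) := by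
        gcongr
        exact (frobenius_norm_mul _ _).trans (mul_le_mul hfirst hsecond (norm_nonneg _)
          (by positivity))
    _ = _ := by ring

end OMM

theorem stmt19_general {N m : ℕ}
    (H : Matrix (Fin N) (Fin N) ℂ)
    (μ : ℝ) (hμ : 0 < μ) :
    ∃ r > (0 : ℝ), Emu H μ (0 : Matrix (Fin N) (Fin m) ℂ) = 0 ∧
      ∀ X : Matrix (Fin N) (Fin m) ℂ, 0 < ‖X‖ → ‖X‖ < r →
        Emu H μ (0 : Matrix (Fin N) (Fin m) ℂ) < Emu H μ X := by
  set C : ℝ := m * (2 * ‖(1 : Matrix (Fin m) (Fin m) ℂ)‖ + 1) * ‖H‖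
  have hC : 0 < C + 1 := by positivity
  refine ⟨min 1 (μ / (C + 1)), by positivity, Emu_zero H μ, fun X hX0 hXr => ?_⟩
  have hCX : C * ‖X‖ < μ := by
    have := (lt_div_iff₀ hC).mp (hXr.trans_le (min_le_right _ _))
    nlinarith
  rw [Emu_zero]
  calc 0 < ‖X‖ * (μ - C * ‖X‖) := mul_pos hX0 (by linarith)
    _ = -(C * ‖X‖ ^ 2) + μ * ‖X‖ := by ring
    _ ≤ E0 H X + μ * l1 X :=
        add_le_add (neg_le_of_abs_le (abs_E0_le H (hXr.le.trans (min_le_left _ _))))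
          (mul_le_mul_of_nonneg_left (norm_le_l1 X) hμ.le)

/-- For every `μ > 0`, the zero matrix is a strict local minimizer of `E_μ`:
`E_μ(X) > E_μ(0) = 0` for all `X` with `0 < ‖X‖_F < r`, for some `r > 0`. -/
theorem stmt19 {N m : ℕ} (hN : 0 < N) (hm : 0 < m) (hmN : m ≤ N)
    (H : Matrix (Fin N) (Fin N) ℂ) (hH : H.IsHermitian) (hneg : (-H).PosDef)
    (μ : ℝ) (hμ : 0 < μ) :
    ∃ r > (0 : ℝ), Emu H μ (0 : Matrix (Fin N) (Fin m) ℂ) = 0 ∧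
      ∀ X : Matrix (Fin N) (Fin m) ℂ, 0 < ‖X‖ → ‖X‖ < r →
        Emu H μ (0 : Matrix (Fin N) (Fin m) ℂ) < Emu H μ X :=
  stmt19_general H μ hμ
end
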